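/- Let λ > 0 and c > 0. The function p(x,t) = λ I₀( (λ/c)√(c²t² − x²) ) / (2c sinh(λt)) satisfies the non-homogeneous telegraph equation ∂²p/∂t² + 2λ coth(λt) ∂p/∂t = c² ∂²p/∂x² for all (x,t) with t > 0 and |x| < ct. -/

import Mathlib

open Real MeasureTheory

/-!
Write `I₀(z) = Φ(z²)` with the entire series `Φ(v) = ∑ vᵏ / (4ᵏ (k!)²)`, which satisfies
`v Φ'' + Φ' = Φ / 4`. Hence `h(x, t) = Φ(λ² t² - (λ x / c)²)` solves
`h_tt - c² h_xx = λ² h`. Since `σ(t) = sinh (λ t)` satisfies `σ'' = λ² σ` and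
`σ' / σ = λ coth (λ t)`, the quotient `h / σ` solves the telegraph equation with rate
`λ coth (λ t)`. On the open cone `|x| < c t` we have `p = λ h / (2 c σ)`, so there the
derivatives of `p` are those of this quotient.
-/

/-- Modified Bessel function of order zero, `I₀(z) = ∑ₖ (z/2)^{2k} / (k!)²`. -/
noncomputable def besselI0 (z : ℝ) : ℝ := ∑' k : ℕ, (z/2)^(2*k) / ((k.factorial : ℝ))^2

/-- The hyperbolic cotangent. -/
noncomputable def coth (t : ℝ) : ℝ := Real.cosh t / Real.sinh t

open Topology
open scoped Nat

noncomputable def powSeries (a : ℕ → ℝ) (u : ℝ) : ℝ := ∑' k, a k * u ^ k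

def derivCoeff (a : ℕ → ℝ) (k : ℕ) : ℝ := (k + 1) * a (k + 1)

section PowSeries

variable {a : ℕ → ℝ} {M b : ℝ}

theorem abs_derivCoeff_le (ha : ∀ k, |a k| ≤ M * b ^ k / k !) (k : ℕ) :
    |derivCoeff a k| ≤ M * b * b ^ k / k ! := by
  have hfact : ((k + 1)! : ℝ) = (k + 1) * k ! := by push_cast [Nat.factorial_succ]; ring
  calc |derivCoeff a k| = (k + 1) * |a (k + 1)| := by
        rw [derivCoeff, abs_mul, abs_of_nonneg (by positivity)]
    _ ≤ (k + 1) * (M * b ^ (k + 1) / (k + 1)!) := by gcongr; exact ha (k + 1)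
    _ = M * b * b ^ k / k ! := by rw [hfact, pow_succ]; field_simp

theorem summable_abs_mul_pow (ha : ∀ k, |a k| ≤ M * b ^ k / k !) (S : ℝ) :
    Summable fun k => |a k| * |S| ^ k := by
  refine .of_nonneg_of_le (fun k => by positivity) (fun k => ?_)
    ((Real.summable_pow_div_factorial (b * |S|)).mul_left M)
  calc |a k| * |S| ^ k ≤ M * b ^ k / k ! * |S| ^ k := by gcongr; exact ha k
    _ = M * ((b * |S|) ^ k / k !) := by ring

theorem summable_powSeries (ha : ∀ k, |a k| ≤ M * b ^ k / k !) (u : ℝ) :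
    Summable fun k => a k * u ^ k :=
  .of_norm_bounded (summable_abs_mul_pow ha u) fun k => by
    rw [Real.norm_eq_abs, abs_mul, abs_pow]

theorem hasDerivAt_powSeries (ha : ∀ k, |a k| ≤ M * b ^ k / k !) (u : ℝ) :
    HasDerivAt (powSeries a) (powSeries (derivCoeff a) u) u := by
  set R := |u| + 1
  have hu : u ∈ Metric.ball (0 : ℝ) R := by simp [R]
  -- `k * |v| ^ (k - 1) ≤ 2 ^ k * R ^ k` on the ball, since `R ≥ 1`
  have hbound : ∀ (k : ℕ) (v : ℝ), v ∈ Metric.ball (0 : ℝ) R →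
      ‖a k * (k * v ^ (k - 1))‖ ≤ |a k| * |2 * R| ^ k := by
    intro k v hv
    have hvR : |v| ≤ R := (mem_ball_zero_iff.mp hv).le
    have hR : 1 ≤ R := by simp [R]
    have hk : (k : ℝ) ≤ 2 ^ k := by exact_mod_cast (Nat.lt_two_pow_self).le
    rw [Real.norm_eq_abs, abs_mul, abs_mul, abs_pow, Nat.abs_cast,
      abs_of_nonneg (by positivity : (0 : ℝ) ≤ 2 * R), mul_pow]
    gcongr
    calc |v| ^ (k - 1) ≤ R ^ (k - 1) := by gcongr
      _ ≤ R ^ k := pow_le_pow_right₀ hR (Nat.sub_le k 1)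
  have hderiv := hasDerivAt_tsum_of_isPreconnected (g := fun k v => a k * v ^ k)
    (g' := fun k v => a k * (k * v ^ (k - 1))) (summable_abs_mul_pow ha (2 * R))
    Metric.isOpen_ball (convex_ball (0 : ℝ) R).isPreconnected
    (fun k v _ => (hasDerivAt_pow k v).const_mul (a k)) hbound hu (summable_powSeries ha u) hu
  have hshift : Summable fun k => a (k + 1) * (((k + 1 : ℕ) : ℝ) * u ^ (k + 1 - 1)) :=
    (summable_powSeries (abs_derivCoeff_le ha) u).congr fun k => by
      simp only [derivCoeff, Nat.add_sub_cancel]; push_cast; ring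
  refine hderiv.congr_deriv ?_
  rw [tsum_eq_zero_add' (f := fun k => a k * (k * u ^ (k - 1))) hshift]
  simp only [CharP.cast_eq_zero, zero_mul, mul_zero, zero_add, Nat.add_sub_cancel]
  exact tsum_congr fun k => by simp only [derivCoeff]; push_cast; ring

theorem powSeries_ode {r : ℝ} (ha : ∀ k, |a k| ≤ M * b ^ k / k !)
    (hrec : ∀ k : ℕ, ((k : ℝ) + 1) ^ 2 * a (k + 1) = r * a k) (u : ℝ) :
    u * powSeries (derivCoeff (derivCoeff a)) u + powSeries (derivCoeff a) u
      = r * powSeries a u := by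
  have h₀ := (hasSum_nat_add_iff' 1).mpr (summable_powSeries ha u).hasSum
  have h₁ := (hasSum_nat_add_iff' 1).mpr
    (summable_powSeries (abs_derivCoeff_le ha) u).hasSum
  have h₂ := (summable_powSeries (abs_derivCoeff_le (abs_derivCoeff_le ha)) u).hasSum
  have hterm : ∀ k : ℕ, u * (derivCoeff (derivCoeff a) k * u ^ k)
      + derivCoeff a (k + 1) * u ^ (k + 1) = r * (a (k + 1) * u ^ (k + 1)) := by
    intro k
    have hk := hrec (k + 1)
    simp only [derivCoeff]
    push_cast at hk ⊢
    linear_combination u ^ (k + 1) * hk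
  have hsum := ((h₂.mul_left u).add h₁).unique ((funext hterm) ▸ h₀.mul_left r)
  have h0 : derivCoeff a 0 = r * a 0 := by simpa [derivCoeff] using hrec 0
  simp only [Finset.sum_range_one, pow_zero, mul_one] at hsum
  unfold powSeries
  linear_combination hsum + h0

end PowSeries

noncomputable def besselI0Coeff (k : ℕ) : ℝ := (1 / 4) ^ k / (k ! : ℝ) ^ 2

theorem abs_besselI0Coeff_le (k : ℕ) : |besselI0Coeff k| ≤ 1 * 1 ^ k / k ! := by
  have hk : (1 : ℝ) ≤ k ! := by exact_mod_cast k.factorial_pos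
  rw [besselI0Coeff, abs_of_nonneg (by positivity), one_pow, one_mul]
  calc (1 / 4 : ℝ) ^ k / (k ! : ℝ) ^ 2 ≤ 1 / (k ! : ℝ) ^ 2 := by
        gcongr; exact pow_le_one₀ (by norm_num) (by norm_num)
    _ ≤ 1 / (k ! : ℝ) := by gcongr; nlinarith

theorem succ_sq_mul_besselI0Coeff_succ (k : ℕ) :
    ((k : ℝ) + 1) ^ 2 * besselI0Coeff (k + 1) = 1 / 4 * besselI0Coeff k := by
  simp only [besselI0Coeff, Nat.factorial_succ]
  push_cast
  field_simp
  ring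

theorem besselI0_eq_powSeries (z : ℝ) : besselI0 z = powSeries besselI0Coeff (z ^ 2) :=
  tsum_congr fun k => by rw [besselI0Coeff, pow_mul, div_pow]; ring

section Calculus

variable {F F' F'' : ℝ → ℝ}

theorem hasDerivAt_comp_quadratic (hF : ∀ u, HasDerivAt F (F' u) u) (α β s : ℝ) :
    HasDerivAt (fun s => F (α * s ^ 2 + β)) (2 * α * s * F' (α * s ^ 2 + β)) s := by
  have hq : HasDerivAt (fun s => α * s ^ 2 + β) (2 * α * s) s := by
    simpa [mul_comm, mul_left_comm] using ((hasDerivAt_pow 2 s).const_mul α).add_const β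
  exact ((hF _).comp s hq).congr_deriv (by ring)

theorem hasDerivAt_deriv_comp_quadratic (hF' : ∀ u, HasDerivAt F' (F'' u) u) (α β s : ℝ) :
    HasDerivAt (fun s => 2 * α * s * F' (α * s ^ 2 + β))
      (2 * α * F' (α * s ^ 2 + β) + (2 * α * s) ^ 2 * F'' (α * s ^ 2 + β)) s := by
  have := ((hasDerivAt_id' s).const_mul (2 * α)).mul (hasDerivAt_comp_quadratic hF' α β s)
  exact this.congr_deriv (by ring)

theorem iteratedDeriv_two_comp_quadratic (hF : ∀ u, HasDerivAt F (F' u) u)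
    (hF' : ∀ u, HasDerivAt F' (F'' u) u) (α β s : ℝ) :
    iteratedDeriv 2 (fun s => F (α * s ^ 2 + β)) s
      = 2 * α * F' (α * s ^ 2 + β) + (2 * α * s) ^ 2 * F'' (α * s ^ 2 + β) := by
  rw [iteratedDeriv_succ, iteratedDeriv_one,
    funext fun s => (hasDerivAt_comp_quadratic hF α β s).deriv,
    (hasDerivAt_deriv_comp_quadratic hF' α β s).deriv]

end Calculus

-- `(σ q)'' = σ (q'' + 2 (σ' / σ) q') + σ'' q`
theorem iteratedDeriv_two_div_add_two_mul_deriv_div {h h' σ σ' : ℝ → ℝ} {h'' σ'' t : ℝ}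
    (hh : ∀ᶠ s in 𝓝 t, HasDerivAt h (h' s) s) (hh' : HasDerivAt h' h'' t)
    (hσ : ∀ᶠ s in 𝓝 t, HasDerivAt σ (σ' s) s) (hσ' : HasDerivAt σ' σ'' t) (ht : σ t ≠ 0) :
    iteratedDeriv 2 (fun s => h s / σ s) t
        + 2 * (σ' t / σ t) * deriv (fun s => h s / σ s) t
      = (h'' - σ'' * (h t / σ t)) / σ t := by
  have hne : ∀ᶠ s in 𝓝 t, σ s ≠ 0 := hσ.self_of_nhds.continuousAt.eventually_ne ht
  have hderiv : deriv (fun s => h s / σ s) =ᶠ[𝓝 t]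
      fun s => (h' s * σ s - h s * σ' s) / σ s ^ 2 := by
    filter_upwards [hh, hσ, hne] with s hhs hσs hs
    exact (hhs.div hσs hs).deriv
  have hderiv2 := ((hh'.fun_mul hσ.self_of_nhds).fun_sub (hh.self_of_nhds.fun_mul hσ')).fun_div
    (hσ.self_of_nhds.fun_pow 2) (pow_ne_zero 2 ht)
  rw [iteratedDeriv_succ, iteratedDeriv_one, hderiv.deriv_eq, hderiv2.deriv, hderiv.self_of_nhds]
  field_simp
  ring

noncomputable def telegraphKernel (Φ : ℝ → ℝ) (lam c x t : ℝ) : ℝ :=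
  Φ (lam ^ 2 * t ^ 2 - (lam * x / c) ^ 2) / (2 * c / lam * sinh (lam * t))

theorem telegraphKernel_solves_telegraph {Φ Φ' Φ'' : ℝ → ℝ} (hΦ : ∀ u, HasDerivAt Φ (Φ' u) u)
    (hΦ' : ∀ u, HasDerivAt Φ' (Φ'' u) u) (hode : ∀ u, u * Φ'' u + Φ' u = 1 / 4 * Φ u)
    {lam c x t : ℝ} (hlam : lam ≠ 0) (hc : c ≠ 0) (ht : t ≠ 0) :
    iteratedDeriv 2 (fun s => telegraphKernel Φ lam c x s) t
        + 2 * lam * coth (lam * t) * deriv (fun s => telegraphKernel Φ lam c x s) t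
      = c ^ 2 * iteratedDeriv 2 (fun y => telegraphKernel Φ lam c y t) x := by
  have hsinh : sinh (lam * t) ≠ 0 := by rw [Ne, Real.sinh_eq_zero]; exact mul_ne_zero hlam ht
  have hσ : ∀ s, HasDerivAt (fun s => 2 * c / lam * sinh (lam * s)) (2 * c * cosh (lam * s)) s :=
    fun s => (((hasDerivAt_id' s).const_mul lam).sinh.const_mul (2 * c / lam)).congr_deriv
      (by field_simp)
  have hσ' : HasDerivAt (fun s => 2 * c * cosh (lam * s)) (2 * c * lam * sinh (lam * t)) t :=
    (((hasDerivAt_id' t).const_mul lam).cosh.const_mul (2 * c)).congr_deriv (by ring)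
  have hq_t : (fun s => telegraphKernel Φ lam c x s)
      = fun s => Φ (lam ^ 2 * s ^ 2 + -(lam * x / c) ^ 2) / (2 * c / lam * sinh (lam * s)) := by
    funext s; rw [telegraphKernel, sub_eq_add_neg]
  have hq_x : (fun y => telegraphKernel Φ lam c y t) = fun y =>
      Φ (-(lam / c) ^ 2 * y ^ 2 + lam ^ 2 * t ^ 2) / (2 * c / lam * sinh (lam * t)) := by
    funext y; unfold telegraphKernel; ring_nf
  have hcoth : 2 * lam * coth (lam * t)
      = 2 * (2 * c * cosh (lam * t) / (2 * c / lam * sinh (lam * t))) := by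
    rw [coth]; field_simp
  rw [hq_t, hq_x, iteratedDeriv_div_const, iteratedDeriv_two_comp_quadratic hΦ hΦ', hcoth,
    iteratedDeriv_two_div_add_two_mul_deriv_div
      (.of_forall (hasDerivAt_comp_quadratic hΦ (lam ^ 2) _))
      (hasDerivAt_deriv_comp_quadratic hΦ' (lam ^ 2) _ t) (.of_forall hσ) hσ'
      (by simp [hc, hlam, hsinh]),
    show -(lam / c) ^ 2 * x ^ 2 + lam ^ 2 * t ^ 2 = lam ^ 2 * t ^ 2 + -(lam * x / c) ^ 2 by
      ring]
  have hode_v := hode (lam ^ 2 * t ^ 2 + -(lam * x / c) ^ 2)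
  generalize hv : lam ^ 2 * t ^ 2 + -(lam * x / c) ^ 2 = v at hode_v ⊢
  field_simp at hv ⊢
  linear_combination 4 * c ^ 2 * hode_v + 4 * Φ'' v * hv

theorem telegraph_coth_rate_law
    (lam c : ℝ) (hlam : 0 < lam) (hc : 0 < c)
    (p : ℝ → ℝ → ℝ)
    (hp : ∀ x, ∀ t : ℝ,
      p x t = lam * besselI0 ((lam/c) * Real.sqrt (c^2*t^2 - x^2))
        / (2 * c * Real.sinh (lam * t))) :
    ∀ x t : ℝ, 0 < t → |x| < c*t →
      iteratedDeriv 2 (fun s => p x s) t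
        + 2 * lam * coth (lam * t) * deriv (fun s => p x s) t
        = c^2 * iteratedDeriv 2 (fun y => p y t) x := by
  intro x t ht hxt
  have hp_cone : ∀ y s, |y| < c * s →
      p y s = telegraphKernel (powSeries besselI0Coeff) lam c y s := by
    intro y s hys
    have hpos : 0 ≤ c ^ 2 * s ^ 2 - y ^ 2 := by nlinarith [abs_nonneg y, sq_abs y]
    rw [hp, besselI0_eq_powSeries, mul_pow, sq_sqrt hpos, telegraphKernel]
    field_simp
  have hp_t : (fun s => p x s) =ᶠ[𝓝 t]
      fun s => telegraphKernel (powSeries besselI0Coeff) lam c x s := by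
    filter_upwards [(isOpen_lt continuous_const (continuous_const_mul c)).mem_nhds hxt]
      with s hs using hp_cone x s hs
  have hp_x : (fun y => p y t) =ᶠ[𝓝 x]
      fun y => telegraphKernel (powSeries besselI0Coeff) lam c y t := by
    filter_upwards [(isOpen_lt continuous_abs continuous_const).mem_nhds hxt]
      with y hy using hp_cone y t hy
  rw [hp_t.iteratedDeriv_eq, hp_t.deriv_eq, hp_x.iteratedDeriv_eq]
  exact telegraphKernel_solves_telegraph (hasDerivAt_powSeries abs_besselI0Coeff_le)
    (hasDerivAt_powSeries (abs_derivCoeff_le abs_besselI0Coeff_le))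
    (powSeries_ode abs_besselI0Coeff_le succ_sq_mul_besselI0Coeff_succ) hlam.ne' hc.ne' ht.ne'
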